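/- Let J satisfy hypothesis (H₀) with exponent q₀ > 0 and let Ψ ∈ Γ_{p,q} with p ≥ q > q₀. Then there exists a constant c > 0 (depending only on J, Ψ, N) such that every continuously differentiable function u : ℝ^N → ℝ with F(u) < ∞ and F(|∇u|) < ∞ satisfies E(u) ≤ c (F(u) + F(|∇u|)); in particular E(u) < ∞. -/

import Mathlib

open MeasureTheory Set Filter

noncomputable section

/-- Hypothesis (H₀) on the kernel `J`. -/
def kernelH0 (N : ℕ) (J : EuclideanSpace ℝ (Fin N) → ℝ) (q₀ : ℝ) : Prop :=
  Measurable J ∧ (∀ z : EuclideanSpace ℝ (Fin N), z ≠ 0 → 0 < J z) ∧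
    (∀ z : EuclideanSpace ℝ (Fin N), J (-z) = J z) ∧
    (∫⁻ z in {z : EuclideanSpace ℝ (Fin N) | ‖z‖ < 1}, ENNReal.ofReal (J z)) = ⊤ ∧
    0 < q₀ ∧
    (∫⁻ z : EuclideanSpace ℝ (Fin N), ENNReal.ofReal (min 1 (‖z‖ ^ q₀) * J z)) < ⊤

/-- The class `Γ_{p,q}` of Young functions. -/
def memGamma (Ψ : ℝ → ℝ) (p q : ℝ) : Prop :=
  ConvexOn ℝ Set.univ Ψ ∧ (∀ s, Ψ (-s) = Ψ s) ∧ ContDiff ℝ 1 Ψ ∧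
    (∀ s, 0 ≤ Ψ s) ∧ Ψ 0 = 0 ∧ Ψ 1 = 1 ∧
    (∀ s : ℝ, s ≠ 0 → q ≤ s * deriv Ψ s / Ψ s ∧ s * deriv Ψ s / Ψ s ≤ p)

/-- `F(u) = ∫ Ψ(u)`. -/
def funcF (N : ℕ) (Ψ : ℝ → ℝ) (u : EuclideanSpace ℝ (Fin N) → ℝ) : ENNReal :=
  ∫⁻ x, ENNReal.ofReal (Ψ (u x))

/-- `F(|∇u|) = ∫ Ψ(|∇u|)`. -/
def funcFgrad (N : ℕ) (Ψ : ℝ → ℝ) (u : EuclideanSpace ℝ (Fin N) → ℝ) : ENNReal :=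
  ∫⁻ x, ENNReal.ofReal (Ψ ‖fderiv ℝ u x‖)

/-- `E(u) = (1/2) ∬ Ψ(u(x)-u(y)) J(x-y)`. -/
def funcE (N : ℕ) (Ψ : ℝ → ℝ) (J u : EuclideanSpace ℝ (Fin N) → ℝ) : ENNReal :=
  (1 / 2) * ∫⁻ x, ∫⁻ y, ENNReal.ofReal (Ψ (u x - u y) * J (x - y))

/-- Interaction energy `ℰ(u;φ)` (real-valued). -/
def interE (N : ℕ) (ψ : ℝ → ℝ) (J u φ : EuclideanSpace ℝ (Fin N) → ℝ) : ℝ :=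
  (1 / 2) * ∫ x, ∫ y, ψ (u x - u y) * (φ x - φ y) * J (x - y)

/-- Interaction energy `ℰ(u;φ)` (extended-nonnegative-valued version, for integrands
of constant sign). -/
def interEplus (N : ℕ) (ψ : ℝ → ℝ) (J u φ : EuclideanSpace ℝ (Fin N) → ℝ) : ENNReal :=
  (1 / 2) * ∫⁻ x, ∫⁻ y, ENNReal.ofReal (ψ (u x - u y) * (φ x - φ y) * J (x - y))

/-- The space `W₀^{J,Ψ}(Ω)`. -/
def memW0 (N : ℕ) (Ψ : ℝ → ℝ) (J : EuclideanSpace ℝ (Fin N) → ℝ)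
    (Ω : Set (EuclideanSpace ℝ (Fin N))) (u : EuclideanSpace ℝ (Fin N) → ℝ) : Prop :=
  Measurable u ∧ funcF N Ψ u < ⊤ ∧ funcE N Ψ J u < ⊤ ∧ ∀ᵐ x ∂volume, x ∉ Ω → u x = 0

/-- `γ⁻_g(s) = inf_{x>0} g(sx)/g(x)`. -/
def gammaLow (g : ℝ → ℝ) (s : ℝ) : ℝ := sInf {r : ℝ | ∃ x : ℝ, 0 < x ∧ r = g (s * x) / g x}

/-- `γ⁺_g(s) = sup_{x>0} g(sx)/g(x)`. -/
def gammaHigh (g : ℝ → ℝ) (s : ℝ) : ℝ := sSup {r : ℝ | ∃ x : ℝ, 0 < x ∧ r = g (s * x) / g x}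

/-!
Substituting `y = x - z` gives `E(u) = ½ ∫ J(z) ∫ Ψ(u(x) - u(x - z)) dx dz`. For `‖z‖ ≤ 1`, write
`u(x) - u(x - z)` as the integral of `∇u` along the segment; Jensen's inequality and
`Ψ(λs) ≤ λ^q Ψ(s)` for `λ ≤ 1` bound the inner integral by `‖z‖^q F(|∇u|)`. For `‖z‖ ≥ 1`,
convexity and `Ψ(2s) ≤ 2^p Ψ(s)` bound it by `2^p F(u)`. Since `q > q₀`, both bounds are
dominated by `min(1, ‖z‖^q₀)`, which is `J`-integrable by (H₀).
-/

open scoped ENNReal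

theorem ConvexOn.le_of_abs_le_of_even {f : ℝ → ℝ} (hf : ConvexOn ℝ univ f)
    (heven : ∀ s, f (-s) = f s) {x y : ℝ} (hxy : |x| ≤ |y|) : f x ≤ f y := by
  have hy : f (-|y|) = f y ∧ f |y| = f y := by
    rcases abs_choice y with h | h <;> simp [h, heven]
  have hx : x ∈ segment ℝ (-|y|) |y| := by
    rw [segment_eq_Icc (neg_le_self (abs_nonneg y))]
    exact abs_le.1 hxy
  calc f x ≤ max (f (-|y|)) (f |y|) := hf.le_max_of_mem_segment (mem_univ _) (mem_univ _) hx
    _ = f y := by rw [hy.1, hy.2, max_self]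

theorem Real.le_rpow_mul_of_log_sub_le {a b l c : ℝ} (ha : 0 < a) (hb : 0 < b) (hl : 0 < l)
    (h : Real.log a - c * Real.log l ≤ Real.log b) : a ≤ l ^ c * b := by
  rw [← Real.log_le_log_iff ha (by positivity), Real.log_mul (by positivity) hb.ne',
    Real.log_rpow hl]
  linarith

namespace memGamma

variable {Ψ : ℝ → ℝ} {p q : ℝ}

theorem pos (hΨ : memGamma Ψ p q) (hq : 0 < q) {s : ℝ} (hs : s ≠ 0) : 0 < Ψ s := by
  obtain ⟨-, -, -, hnonneg, -, -, hindex⟩ := hΨ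
  refine (hnonneg s).lt_of_ne fun h => ?_
  have := (hindex s hs).1
  rw [← h, div_zero] at this
  linarith

theorem hasDerivAt_log_comp_mul_sub (hΨ : memGamma Ψ p q) (hq : 0 < q) (c : ℝ) {s t : ℝ}
    (hs : s ≠ 0) (ht : 0 < t) :
    HasDerivAt (fun t => Real.log (Ψ (t * s)) - c * Real.log t)
      ((t * s * deriv Ψ (t * s) / Ψ (t * s) - c) / t) t := by
  have ⟨_, _, hC1, _⟩ := hΨ
  have hΨt : HasDerivAt (fun t => Ψ (t * s)) (deriv Ψ (t * s) * s) t :=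
    ((hC1.differentiable one_ne_zero (t * s)).hasDerivAt).comp t (hasDerivAt_mul_const s)
  have hΨts : Ψ (t * s) ≠ 0 := (hΨ.pos hq (mul_ne_zero ht.ne' hs)).ne'
  refine ((hΨt.log hΨts).sub ((Real.hasDerivAt_log ht.ne').const_mul c)).congr_deriv ?_
  field_simp

theorem monotoneOn_log_comp_mul_sub_q (hΨ : memGamma Ψ p q) (hq : 0 < q) {s : ℝ} (hs : s ≠ 0) :
    MonotoneOn (fun t => Real.log (Ψ (t * s)) - q * Real.log t) (Ioi 0) := by
  have ⟨_, _, _, _, _, _, hindex⟩ := hΨ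
  refine monotoneOn_of_hasDerivWithinAt_nonneg (convex_Ioi 0)
    (f' := fun t => (t * s * deriv Ψ (t * s) / Ψ (t * s) - q) / t)
    (fun t ht => (hΨ.hasDerivAt_log_comp_mul_sub hq q hs ht).continuousAt.continuousWithinAt)
    (fun t ht => ?_) (fun t ht => ?_) <;> rw [interior_Ioi] at ht
  · exact (hΨ.hasDerivAt_log_comp_mul_sub hq q hs ht).hasDerivWithinAt
  · exact div_nonneg (sub_nonneg.2 (hindex _ (mul_ne_zero ht.ne' hs)).1) ht.le

theorem antitoneOn_log_comp_mul_sub_p (hΨ : memGamma Ψ p q) (hq : 0 < q) {s : ℝ} (hs : s ≠ 0) :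
    AntitoneOn (fun t => Real.log (Ψ (t * s)) - p * Real.log t) (Ioi 0) := by
  have ⟨_, _, _, _, _, _, hindex⟩ := hΨ
  refine antitoneOn_of_hasDerivWithinAt_nonpos (convex_Ioi 0)
    (f' := fun t => (t * s * deriv Ψ (t * s) / Ψ (t * s) - p) / t)
    (fun t ht => (hΨ.hasDerivAt_log_comp_mul_sub hq p hs ht).continuousAt.continuousWithinAt)
    (fun t ht => ?_) (fun t ht => ?_) <;> rw [interior_Ioi] at ht
  · exact (hΨ.hasDerivAt_log_comp_mul_sub hq p hs ht).hasDerivWithinAt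
  · exact div_nonpos_of_nonpos_of_nonneg
      (sub_nonpos.2 (hindex _ (mul_ne_zero ht.ne' hs)).2) ht.le

theorem le_rpow_mul_of_le_one (hΨ : memGamma Ψ p q) (hq : 0 < q) (s : ℝ) {l : ℝ}
    (hl0 : 0 ≤ l) (hl1 : l ≤ 1) : Ψ (l * s) ≤ l ^ q * Ψ s := by
  have ⟨_, _, _, _, hΨ0, _⟩ := hΨ
  rcases eq_or_ne s 0 with rfl | hs
  · simp [hΨ0]
  rcases hl0.eq_or_lt with rfl | hl0
  · rw [zero_mul, hΨ0, Real.zero_rpow hq.ne', zero_mul]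
  refine Real.le_rpow_mul_of_log_sub_le (hΨ.pos hq (mul_ne_zero hl0.ne' hs)) (hΨ.pos hq hs) hl0 ?_
  simpa using hΨ.monotoneOn_log_comp_mul_sub_q hq hs hl0 (mem_Ioi.2 one_pos) hl1

theorem le_rpow_mul_of_one_le (hΨ : memGamma Ψ p q) (hq : 0 < q) (s : ℝ) {l : ℝ}
    (hl : 1 ≤ l) : Ψ (l * s) ≤ l ^ p * Ψ s := by
  have ⟨_, _, _, _, hΨ0, _⟩ := hΨ
  rcases eq_or_ne s 0 with rfl | hs
  · simp [hΨ0]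
  have hl0 : 0 < l := one_pos.trans_le hl
  refine Real.le_rpow_mul_of_log_sub_le (hΨ.pos hq (mul_ne_zero hl0.ne' hs)) (hΨ.pos hq hs) hl0 ?_
  simpa using hΨ.antitoneOn_log_comp_mul_sub_p hq hs (mem_Ioi.2 one_pos) hl0 hl

theorem sub_le (hΨ : memGamma Ψ p q) (hq : 0 < q) (a b : ℝ) :
    Ψ (a - b) ≤ 2 ^ p / 2 * (Ψ a + Ψ b) := by
  have ⟨⟨_, hconv⟩, heven, _⟩ := hΨ
  have hab := hconv (mem_univ (2 * a)) (mem_univ (2 * -b)) (by norm_num : (0 : ℝ) ≤ 1 / 2)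
    (by norm_num : (0 : ℝ) ≤ 1 / 2) (by norm_num)
  have ha := hΨ.le_rpow_mul_of_one_le hq a one_le_two
  have hb := hΨ.le_rpow_mul_of_one_le hq (-b) one_le_two
  rw [heven] at hb
  simp only [smul_eq_mul] at hab
  calc Ψ (a - b) = Ψ (1 / 2 * (2 * a) + 1 / 2 * (2 * -b)) := by ring_nf
    _ ≤ 1 / 2 * Ψ (2 * a) + 1 / 2 * Ψ (2 * -b) := hab
    _ ≤ 2 ^ p / 2 * (Ψ a + Ψ b) := by linarith

end memGamma

section Segment

variable {E : Type*} [NormedAddCommGroup E] [NormedSpace ℝ E]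

theorem ContDiff.sub_comp_sub_eq_integral_fderiv {u : E → ℝ} (hu : ContDiff ℝ 1 u) (x z : E) :
    u x - u (x - z) = ∫ t in Ioc (0 : ℝ) 1, fderiv ℝ u (x + (t - 1) • z) z := by
  have hγ : ∀ t : ℝ, HasDerivAt (fun t : ℝ => x + (t - 1) • z) z t := fun t => by
    simpa using (((hasDerivAt_id t).sub_const 1).smul_const z).const_add x
  have hderiv : ∀ t : ℝ, HasDerivAt (fun t => u (x + (t - 1) • z))
      (fderiv ℝ u (x + (t - 1) • z) z) t := fun t =>
    (hu.differentiable one_ne_zero _).hasFDerivAt.comp_hasDerivAt t (hγ t)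
  have hcont : Continuous fun t : ℝ => fderiv ℝ u (x + (t - 1) • z) z := by
    have := hu.continuous_fderiv one_ne_zero
    fun_prop
  rw [← intervalIntegral.integral_of_le zero_le_one,
    intervalIntegral.integral_eq_sub_of_hasDerivAt (fun t _ => hderiv t)
      (hcont.intervalIntegrable 0 1)]
  simp [sub_eq_add_neg]

namespace memGamma

variable {Ψ : ℝ → ℝ} {p q : ℝ}

theorem sub_comp_sub_le_integral (hΨ : memGamma Ψ p q) (hq : 0 < q) {u : E → ℝ}
    (hu : ContDiff ℝ 1 u) (x : E) {z : E} (hz : ‖z‖ ≤ 1) :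
    Ψ (u x - u (x - z)) ≤ ‖z‖ ^ q * ∫ t in Ioc (0 : ℝ) 1, Ψ ‖fderiv ℝ u (x + (t - 1) • z)‖ := by
  have ⟨hconv, heven, hC1, hnonneg, _⟩ := hΨ
  have hΨc : Continuous Ψ := hC1.continuous
  have hDu : Continuous fun t : ℝ => fderiv ℝ u (x + (t - 1) • z) := by
    have := hu.continuous_fderiv one_ne_zero
    fun_prop
  have : IsProbabilityMeasure (volume.restrict (Ioc (0 : ℝ) 1)) := ⟨by simp⟩
  have hpt : ∀ t : ℝ, Ψ (fderiv ℝ u (x + (t - 1) • z) z) ≤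
      ‖z‖ ^ q * Ψ ‖fderiv ℝ u (x + (t - 1) • z)‖ := fun t => calc
    _ ≤ Ψ (‖z‖ * ‖fderiv ℝ u (x + (t - 1) • z)‖) := by
      refine hconv.le_of_abs_le_of_even heven ?_
      rw [abs_mul, abs_norm, abs_norm, mul_comm, ← Real.norm_eq_abs]
      exact ContinuousLinearMap.le_opNorm _ _
    _ ≤ _ := hΨ.le_rpow_mul_of_le_one hq _ (norm_nonneg z) hz
  rw [hu.sub_comp_sub_eq_integral_fderiv, ← integral_const_mul]
  calc _ ≤ ∫ t in Ioc (0 : ℝ) 1, Ψ (fderiv ℝ u (x + (t - 1) • z) z) :=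
        hconv.map_integral_le hΨc.continuousOn isClosed_univ (ae_of_all _ fun _ => mem_univ _)
          (hDu.clm_apply continuous_const).integrableOn_Ioc
          (hΨc.comp (hDu.clm_apply continuous_const)).integrableOn_Ioc
    _ ≤ _ := integral_mono_of_nonneg (ae_of_all _ fun _ => hnonneg _)
        (continuous_const.mul (hΨc.comp hDu.norm)).integrableOn_Ioc (ae_of_all _ hpt)

end memGamma

end Segment

def shiftEnergy (N : ℕ) (Ψ : ℝ → ℝ) (u : EuclideanSpace ℝ (Fin N) → ℝ)
    (z : EuclideanSpace ℝ (Fin N)) : ℝ≥0∞ :=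
  ∫⁻ x, ENNReal.ofReal (Ψ (u x - u (x - z)))

section ShiftEnergy

variable {N : ℕ} {Ψ : ℝ → ℝ} {p q : ℝ} {u : EuclideanSpace ℝ (Fin N) → ℝ}

theorem funcE_eq_lintegral_shiftEnergy {J : EuclideanSpace ℝ (Fin N) → ℝ} (hΨ : Measurable Ψ)
    (hΨ0 : ∀ s, 0 ≤ Ψ s) (hu : Measurable u) (hJ : Measurable J) :
    funcE N Ψ J u = 1 / 2 * ∫⁻ z, shiftEnergy N Ψ u z * ENNReal.ofReal (J z) := by
  unfold funcE shiftEnergy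
  congr 1
  calc ∫⁻ x, ∫⁻ y, ENNReal.ofReal (Ψ (u x - u y) * J (x - y))
      = ∫⁻ x, ∫⁻ z, ENNReal.ofReal (Ψ (u x - u (x - z))) * ENNReal.ofReal (J z) :=
        lintegral_congr fun x => by
          rw [← lintegral_sub_left_eq_self _ x]
          simp only [sub_sub_cancel, ENNReal.ofReal_mul (hΨ0 _)]
    _ = ∫⁻ z, ∫⁻ x, ENNReal.ofReal (Ψ (u x - u (x - z))) * ENNReal.ofReal (J z) :=
        lintegral_lintegral_swap (by fun_prop)
    _ = _ := lintegral_congr fun z => lintegral_mul_const' _ _ ENNReal.ofReal_ne_top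

namespace memGamma

theorem shiftEnergy_le_funcFgrad (hΨ : memGamma Ψ p q) (hq : 0 < q) (hu : ContDiff ℝ 1 u)
    {z : EuclideanSpace ℝ (Fin N)} (hz : ‖z‖ ≤ 1) :
    shiftEnergy N Ψ u z ≤ ENNReal.ofReal (‖z‖ ^ q) * funcFgrad N Ψ u := by
  have ⟨_, _, hC1, hnonneg, _⟩ := hΨ
  have hΨc : Continuous Ψ := hC1.continuous
  have hDu := hu.continuous_fderiv one_ne_zero
  calc shiftEnergy N Ψ u z
      ≤ ∫⁻ x, ENNReal.ofReal (‖z‖ ^ q) *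
          ∫⁻ t in Ioc (0 : ℝ) 1, ENNReal.ofReal (Ψ ‖fderiv ℝ u (x + (t - 1) • z)‖) :=
        lintegral_mono fun x => by
          rw [← ofReal_integral_eq_lintegral_ofReal (by fun_prop : Continuous fun t : ℝ =>
              Ψ ‖fderiv ℝ u (x + (t - 1) • z)‖).integrableOn_Ioc
              (ae_of_all _ fun _ => hnonneg _),
            ← ENNReal.ofReal_mul (by positivity)]
          exact ENNReal.ofReal_le_ofReal (hΨ.sub_comp_sub_le_integral hq hu x hz)
    _ = ENNReal.ofReal (‖z‖ ^ q) *
          ∫⁻ t in Ioc (0 : ℝ) 1, ∫⁻ x, ENNReal.ofReal (Ψ ‖fderiv ℝ u (x + (t - 1) • z)‖) := by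
        have hm : Measurable (Function.uncurry fun x (t : ℝ) =>
            ENNReal.ofReal (Ψ ‖fderiv ℝ u (x + (t - 1) • z)‖)) :=
          ENNReal.measurable_ofReal.comp (Continuous.measurable (by fun_prop))
        rw [lintegral_const_mul' _ _ ENNReal.ofReal_ne_top,
          lintegral_lintegral_swap hm.aemeasurable]
    _ = ENNReal.ofReal (‖z‖ ^ q) * funcFgrad N Ψ u := by
        simp_rw [lintegral_add_right_eq_self (fun w => ENNReal.ofReal (Ψ ‖fderiv ℝ u w‖))]
        simp [funcFgrad]

theorem shiftEnergy_le_funcF (hΨ : memGamma Ψ p q) (hq : 0 < q) (hu : Measurable u)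
    (z : EuclideanSpace ℝ (Fin N)) :
    shiftEnergy N Ψ u z ≤ ENNReal.ofReal (2 ^ p) * funcF N Ψ u := by
  have ⟨_, _, hC1, hnonneg, _⟩ := hΨ
  have hΨm : Measurable Ψ := hC1.continuous.measurable
  calc shiftEnergy N Ψ u z
      ≤ ∫⁻ x, ENNReal.ofReal (2 ^ p / 2) *
          (ENNReal.ofReal (Ψ (u x)) + ENNReal.ofReal (Ψ (u (x - z)))) :=
        lintegral_mono fun x => by
          rw [← ENNReal.ofReal_add (hnonneg _) (hnonneg _),
            ← ENNReal.ofReal_mul (by positivity)]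
          exact ENNReal.ofReal_le_ofReal (hΨ.sub_le hq _ _)
    _ = ENNReal.ofReal (2 ^ p / 2) * (funcF N Ψ u + funcF N Ψ u) := by
        rw [lintegral_const_mul' _ _ ENNReal.ofReal_ne_top, lintegral_add_left (by fun_prop),
          lintegral_sub_right_eq_self (fun w => ENNReal.ofReal (Ψ (u w))) z]
        rfl
    _ = ENNReal.ofReal (2 ^ p) * funcF N Ψ u := by
        rw [← two_mul, ← mul_assoc, ← ENNReal.ofReal_ofNat 2, ← ENNReal.ofReal_mul (by positivity),
          div_mul_cancel₀ _ two_ne_zero]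

theorem shiftEnergy_le_min (hΨ : memGamma Ψ p q) {q₀ : ℝ} (hq₀ : 0 < q₀) (hq₀q : q₀ ≤ q)
    (hu : ContDiff ℝ 1 u) (z : EuclideanSpace ℝ (Fin N)) :
    shiftEnergy N Ψ u z ≤
      (ENNReal.ofReal (2 ^ p) * funcF N Ψ u + funcFgrad N Ψ u) *
        ENNReal.ofReal (min 1 (‖z‖ ^ q₀)) := by
  have hq : 0 < q := hq₀.trans_le hq₀q
  rcases le_total ‖z‖ 1 with hz | hz
  · calc shiftEnergy N Ψ u z ≤ ENNReal.ofReal (‖z‖ ^ q) * funcFgrad N Ψ u :=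
          hΨ.shiftEnergy_le_funcFgrad hq hu hz
      _ ≤ ENNReal.ofReal (min 1 (‖z‖ ^ q₀)) * funcFgrad N Ψ u := by
          gcongr
          exact le_min (Real.rpow_le_one (norm_nonneg z) hz hq.le)
            (Real.rpow_le_rpow_of_exponent_ge' (norm_nonneg z) hz hq₀.le hq₀q)
      _ ≤ _ := by
          rw [mul_comm]
          gcongr
          exact le_add_self
  · rw [min_eq_left (Real.one_le_rpow hz hq₀.le), ENNReal.ofReal_one, mul_one]
    exact (hΨ.shiftEnergy_le_funcF hq hu.continuous.measurable z).trans le_self_add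

end memGamma

end ShiftEnergy

theorem ENNReal.ofReal_mul_add_mul_le {r : ℝ} (hr : 0 ≤ r) {κ : ℝ≥0∞} (hκ : κ ≠ ⊤)
    (a b : ℝ≥0∞) :
    (ENNReal.ofReal r * a + b) * κ ≤ ENNReal.ofReal ((r + 1) * (κ.toReal + 1)) * (a + b) := by
  have hκ_le : κ ≤ ENNReal.ofReal (κ.toReal + 1) :=
    (ENNReal.le_ofReal_iff_toReal_le hκ (by positivity)).2 (le_add_of_nonneg_right zero_le_one)
  have hab : ENNReal.ofReal r * a + b ≤ ENNReal.ofReal (r + 1) * (a + b) := by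
    rw [ENNReal.ofReal_add hr zero_le_one, ENNReal.ofReal_one, add_mul, one_mul]
    gcongr
    · exact le_self_add
    · exact le_add_self
  calc (ENNReal.ofReal r * a + b) * κ
      ≤ ENNReal.ofReal (r + 1) * (a + b) * ENNReal.ofReal (κ.toReal + 1) := by gcongr
    _ = _ := by
        rw [ENNReal.ofReal_mul (by positivity)]
        ring

theorem stmt2_general (N : ℕ) (q₀ : ℝ) (J : EuclideanSpace ℝ (Fin N) → ℝ) (hJ : kernelH0 N J q₀)
    (p q : ℝ) (hq0 : q₀ < q)
    (Ψ : ℝ → ℝ) (hΨ : memGamma Ψ p q) :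
    ∃ c : ℝ, 0 < c ∧ ∀ u : EuclideanSpace ℝ (Fin N) → ℝ, ContDiff ℝ 1 u →
      funcF N Ψ u < ⊤ → funcFgrad N Ψ u < ⊤ →
      funcE N Ψ J u ≤ ENNReal.ofReal c * (funcF N Ψ u + funcFgrad N Ψ u) := by
  obtain ⟨hJm, -, -, -, hq₀, hκ⟩ := hJ
  have ⟨_, _, hC1, hnonneg, _⟩ := hΨ
  set κ := ∫⁻ z, ENNReal.ofReal (min 1 (‖z‖ ^ q₀) * J z)
  refine ⟨(2 ^ p + 1) * (κ.toReal + 1), by positivity, fun u hu _ _ => ?_⟩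
  set F := funcF N Ψ u
  set Fg := funcFgrad N Ψ u
  calc funcE N Ψ J u = 1 / 2 * ∫⁻ z, shiftEnergy N Ψ u z * ENNReal.ofReal (J z) :=
        funcE_eq_lintegral_shiftEnergy hC1.continuous.measurable hnonneg
          hu.continuous.measurable hJm
    _ ≤ ∫⁻ z, shiftEnergy N Ψ u z * ENNReal.ofReal (J z) := mul_le_of_le_one_left' (by norm_num)
    _ ≤ ∫⁻ z, (ENNReal.ofReal (2 ^ p) * F + Fg) * ENNReal.ofReal (min 1 (‖z‖ ^ q₀) * J z) :=
        lintegral_mono fun z => by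
          rw [ENNReal.ofReal_mul (by positivity), ← mul_assoc]
          gcongr
          exact hΨ.shiftEnergy_le_min hq₀ hq0.le hu z
    _ = (ENNReal.ofReal (2 ^ p) * F + Fg) * κ := lintegral_const_mul _ (by fun_prop)
    _ ≤ _ := ENNReal.ofReal_mul_add_mul_le (by positivity) hκ.ne _ _

theorem stmt2 (N : ℕ) (q₀ : ℝ) (J : EuclideanSpace ℝ (Fin N) → ℝ) (hJ : kernelH0 N J q₀)
    (p q : ℝ) (hq1 : 1 < q) (hq0 : q₀ < q) (hpq : q ≤ p)
    (Ψ : ℝ → ℝ) (hΨ : memGamma Ψ p q) :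
    ∃ c : ℝ, 0 < c ∧ ∀ u : EuclideanSpace ℝ (Fin N) → ℝ, ContDiff ℝ 1 u →
      funcF N Ψ u < ⊤ → funcFgrad N Ψ u < ⊤ →
      funcE N Ψ J u ≤ ENNReal.ofReal c * (funcF N Ψ u + funcFgrad N Ψ u) :=
  stmt2_general N q₀ J hJ p q hq0 Ψ hΨ
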